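/- arXiv:quant-ph/9608032 — 2 statements merged into one kernel-verified Lean document; each statement's English description precedes it below -/
import Mathlib

section
/- Suppose N×N complex matrices satisfy the factorization property: if Λⱼ = [[τⱼ⁻¹, −τⱼ⁻¹ρ̃ⱼ],[ρⱼτⱼ⁻¹, (τ̃ⱼᴴ)⁻¹]] for j = 1,2 encode two scattering systems and all the amplitude matrices τⱼ, ρⱼ, ρ̃ⱼ, τ̃ⱼ of both systems mutually commute, then the product Λ₁Λ₂ again has the form [[τ⁻¹, −τ⁻¹ρ̃],[ρτ⁻¹, (τ̃ᴴ)⁻¹]] with τ = τ₂(1 − ρ̃₁ρ₂)⁻¹τ₁, ρ = ρ₁ + τ̃₁ρ₂(1 − ρ̃₁ρ₂)⁻¹τ₁, ρ̃ = ρ̃₂ + τ₂ρ̃₁(1 − ρ₂ρ̃₁)⁻¹τ̃₂, τ̃ = τ̃₁(1 − ρ₂ρ̃₁)⁻¹τ̃₂, provided all inverses exist. -/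
open Matrix
private lemma commute_inv_left' {N : ℕ} {A B : Matrix (Fin N) (Fin N) ℂ}
    (h : Commute A B) : Commute A⁻¹ B := by
  rw [Matrix.nonsing_inv_eq_ringInverse]
  by_cases hA : IsUnit A
  · obtain ⟨u, rfl⟩ := hA
    rw [Ring.inverse_unit]
    exact h.units_inv_left
  · rw [Ring.inverse_non_unit _ hA]
    exact Commute.zero_left B

private lemma key_comm {R : Type*} [CommRing R]
    (t1 r1 rt1 tt1 t2 r2 rt2 tt2 i1 i2 j1 j2 m a1 a2 b1 b2 : R)
    (h1 : t1 * i1 = 1) (h2 : t2 * i2 = 1)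
    (hm : (1 - rt1 * r2) * m = 1)
    (hb1 : b1 * j1 = 1) (hb2 : b2 * j2 = 1)
    (B1 : a1 * t1 + b1 * r1 = 0)
    (B2 : a1 * rt1 + b1 * tt1 = 1)
    (B3 : t2 * a2 + rt2 * b2 = 0)
    (B4 : r2 * a2 + tt2 * b2 = 1) :
    (i1 * i2 + -(i1 * rt1) * (r2 * i2) = i1 * (1 - rt1 * r2) * i2) ∧
    (i1 * -(i2 * rt2) + -(i1 * rt1) * j2
       = -(i1 * (1 - rt1 * r2) * i2 * (rt2 + t2 * rt1 * m * tt2))) ∧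
    (r1 * i1 * i2 + j1 * (r2 * i2)
       = (r1 + tt1 * r2 * m * t1) * (i1 * (1 - rt1 * r2) * i2)) ∧
    (r1 * i1 * -(i2 * rt2) + j1 * j2 = j1 * (1 - a1 * a2) * j2) := by
  have F1 : j1 * a1 = -(r1 * i1) := by
    linear_combination (i1*j1)*B1 - (j1*a1)*h1 - (r1*i1)*hb1
  have F2 : j2 * a2 = -(i2 * rt2) := by
    linear_combination (i2*j2)*B3 - (j2*a2)*h2 - (i2*rt2)*hb2
  have E1 : j1 = tt1 - r1 * i1 * rt1 := by
    linear_combination (-j1)*B2 + tt1*hb1 + rt1*F1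
  have E2 : j2 = tt2 - r2 * i2 * rt2 := by
    linear_combination (-j2)*B4 + tt2*hb2 + r2*F2
  refine ⟨by ring, ?_, ?_, ?_⟩
  · linear_combination (-(i1*rt1))*E2 + (i1*rt1*tt2*(1-rt1*r2)*m)*h2 + (i1*rt1*tt2)*hm
  · linear_combination (r2*i2)*E1 - (tt1*r2*i2*m*(1-rt1*r2))*h1 - (tt1*r2*i2)*hm
  · linear_combination (a2*j2)*F1 + (-(r1*i1))*F2
theorem stmt_11 (N : ℕ)
    (τ₁ ρ₁ ρt₁ τt₁ τ₂ ρ₂ ρt₂ τt₂ : Matrix (Fin N) (Fin N) ℂ)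
    (hunit₁ : (Matrix.fromBlocks τ₁ ρt₁ ρ₁ τt₁)ᴴ * Matrix.fromBlocks τ₁ ρt₁ ρ₁ τt₁ = 1 ∧
              Matrix.fromBlocks τ₁ ρt₁ ρ₁ τt₁ * (Matrix.fromBlocks τ₁ ρt₁ ρ₁ τt₁)ᴴ = 1)
    (hunit₂ : (Matrix.fromBlocks τ₂ ρt₂ ρ₂ τt₂)ᴴ * Matrix.fromBlocks τ₂ ρt₂ ρ₂ τt₂ = 1 ∧
              Matrix.fromBlocks τ₂ ρt₂ ρ₂ τt₂ * (Matrix.fromBlocks τ₂ ρt₂ ρ₂ τt₂)ᴴ = 1)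
    (hcomm : ∀ A ∈ ({τ₁, ρ₁, ρt₁, τt₁, τ₂, ρ₂, ρt₂, τt₂, τ₁ᴴ, ρ₁ᴴ, ρt₁ᴴ, τt₁ᴴ, τ₂ᴴ, ρ₂ᴴ, ρt₂ᴴ, τt₂ᴴ} :
        Set (Matrix (Fin N) (Fin N) ℂ)),
      ∀ B ∈ ({τ₁, ρ₁, ρt₁, τt₁, τ₂, ρ₂, ρt₂, τt₂, τ₁ᴴ, ρ₁ᴴ, ρt₁ᴴ, τt₁ᴴ, τ₂ᴴ, ρ₂ᴴ, ρt₂ᴴ, τt₂ᴴ} :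
        Set (Matrix (Fin N) (Fin N) ℂ)), Commute A B)
    (hτ₁ : IsUnit τ₁) (hτ₂ : IsUnit τ₂) (hτt₁ : IsUnit τt₁) (hτt₂ : IsUnit τt₂)
    (h12 : IsUnit (1 - ρt₁ * ρ₂)) (h21 : IsUnit (1 - ρ₂ * ρt₁))
    (τ ρ ρt τt : Matrix (Fin N) (Fin N) ℂ)
    (hτ : τ = τ₂ * (1 - ρt₁ * ρ₂)⁻¹ * τ₁)
    (hρ : ρ = ρ₁ + τt₁ * ρ₂ * (1 - ρt₁ * ρ₂)⁻¹ * τ₁)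
    (hρt : ρt = ρt₂ + τ₂ * ρt₁ * (1 - ρ₂ * ρt₁)⁻¹ * τt₂)
    (hτt : τt = τt₁ * (1 - ρ₂ * ρt₁)⁻¹ * τt₂) :
    Matrix.fromBlocks τ₁⁻¹ (-(τ₁⁻¹ * ρt₁)) (ρ₁ * τ₁⁻¹) (τt₁ᴴ)⁻¹ *
      Matrix.fromBlocks τ₂⁻¹ (-(τ₂⁻¹ * ρt₂)) (ρ₂ * τ₂⁻¹) (τt₂ᴴ)⁻¹ =
    Matrix.fromBlocks τ⁻¹ (-(τ⁻¹ * ρt)) (ρ * τ⁻¹) (τtᴴ)⁻¹ := by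
  classical
  -- The double centralizer of the generating set: a commutative subring
  -- containing all generators and closed under matrix inverse.
  set S : Set (Matrix (Fin N) (Fin N) ℂ) :=
    {τ₁, ρ₁, ρt₁, τt₁, τ₂, ρ₂, ρt₂, τt₂, τ₁ᴴ, ρ₁ᴴ, ρt₁ᴴ, τt₁ᴴ, τ₂ᴴ, ρ₂ᴴ, ρt₂ᴴ, τt₂ᴴ} with hS
  set C1 : Subring (Matrix (Fin N) (Fin N) ℂ) := Subring.centralizer S with hC1
  set Z : Subring (Matrix (Fin N) (Fin N) ℂ) :=
    Subring.centralizer (C1 : Set (Matrix (Fin N) (Fin N) ℂ)) with hZ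
  have hSZ : ∀ x ∈ S, x ∈ Z := fun x hx y hy => (hy x hx).symm
  have hZinv : ∀ x : Matrix (Fin N) (Fin N) ℂ, x ∈ Z → x⁻¹ ∈ Z := by
    intro x hx y hy
    have hc : Commute x y := (hx y hy).symm
    exact ((commute_inv_left' hc).symm : Commute y x⁻¹)
  have hSC1 : S ⊆ (C1 : Set (Matrix (Fin N) (Fin N) ℂ)) := fun x hx g hg => hcomm g hg x hx
  have hZsubC1 : (Z : Set (Matrix (Fin N) (Fin N) ℂ)) ⊆ (C1 : Set (Matrix (Fin N) (Fin N) ℂ)) :=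
    Set.centralizer_subset hSC1
  have hZcomm : ∀ a b : Z, (a : Matrix (Fin N) (Fin N) ℂ) * b = b * a :=
    fun a b => b.2 a (hZsubC1 a.2)
  letI : CommRing Z :=
    { (inferInstance : Ring Z) with mul_comm := fun a b => Subtype.ext (hZcomm a b) }
  -- determinant units
  have dτ₁ : IsUnit τ₁.det := (Matrix.isUnit_iff_isUnit_det _).mp hτ₁
  have dτ₂ : IsUnit τ₂.det := (Matrix.isUnit_iff_isUnit_det _).mp hτ₂
  have hunitH : ∀ A : Matrix (Fin N) (Fin N) ℂ, IsUnit A → IsUnit Aᴴ := by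
    intro A hA
    rw [Matrix.isUnit_iff_isUnit_det, Matrix.det_conjTranspose]
    exact ((Matrix.isUnit_iff_isUnit_det _).mp hA).star
  have dτt₁H : IsUnit (τt₁ᴴ).det := (Matrix.isUnit_iff_isUnit_det _).mp (hunitH _ hτt₁)
  have dτt₂H : IsUnit (τt₂ᴴ).det := (Matrix.isUnit_iff_isUnit_det _).mp (hunitH _ hτt₂)
  have dM : IsUnit (1 - ρt₁ * ρ₂).det := (Matrix.isUnit_iff_isUnit_det _).mp h12
  -- block relations from unitarity
  have hu1 := hunit₁.1
  have hu2 := hunit₂.2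
  rw [Matrix.fromBlocks_conjTranspose, Matrix.fromBlocks_multiply, ← Matrix.fromBlocks_one,
    Matrix.fromBlocks_inj] at hu1 hu2
  have B1 : ρt₁ᴴ * τ₁ + τt₁ᴴ * ρ₁ = 0 := hu1.2.2.1
  have B2 : ρt₁ᴴ * ρt₁ + τt₁ᴴ * τt₁ = 1 := hu1.2.2.2
  have B3 : τ₂ * ρ₂ᴴ + ρt₂ * τt₂ᴴ = 0 := hu2.2.1
  have B4 : ρ₂ * ρ₂ᴴ + τt₂ * τt₂ᴴ = 1 := hu2.2.2.2
  -- elements of Z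
  have mS : ∀ x ∈ S, x ∈ Z := hSZ
  have m_t1 : τ₁ ∈ Z := mS _ (by simp [hS])
  have m_r1 : ρ₁ ∈ Z := mS _ (by simp [hS])
  have m_rt1 : ρt₁ ∈ Z := mS _ (by simp [hS])
  have m_tt1 : τt₁ ∈ Z := mS _ (by simp [hS])
  have m_t2 : τ₂ ∈ Z := mS _ (by simp [hS])
  have m_r2 : ρ₂ ∈ Z := mS _ (by simp [hS])
  have m_rt2 : ρt₂ ∈ Z := mS _ (by simp [hS])
  have m_tt2 : τt₂ ∈ Z := mS _ (by simp [hS])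
  have m_a1 : ρt₁ᴴ ∈ Z := mS _ (by simp [hS])
  have m_a2 : ρ₂ᴴ ∈ Z := mS _ (by simp [hS])
  have m_b1 : τt₁ᴴ ∈ Z := mS _ (by simp [hS])
  have m_b2 : τt₂ᴴ ∈ Z := mS _ (by simp [hS])
  have m_i1 : τ₁⁻¹ ∈ Z := hZinv _ m_t1
  have m_i2 : τ₂⁻¹ ∈ Z := hZinv _ m_t2
  have m_j1 : (τt₁ᴴ)⁻¹ ∈ Z := hZinv _ m_b1
  have m_j2 : (τt₂ᴴ)⁻¹ ∈ Z := hZinv _ m_b2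
  have m_M : (1 - ρt₁ * ρ₂) ∈ Z := Subring.sub_mem _ (Subring.one_mem _) (Subring.mul_mem _ m_rt1 m_r2)
  have m_m : (1 - ρt₁ * ρ₂)⁻¹ ∈ Z := hZinv _ m_M
  -- bundled elements
  obtain ⟨c11, c12, c21, c22⟩ :=
    key_comm (⟨τ₁, m_t1⟩ : Z) ⟨ρ₁, m_r1⟩ ⟨ρt₁, m_rt1⟩ ⟨τt₁, m_tt1⟩ ⟨τ₂, m_t2⟩ ⟨ρ₂, m_r2⟩
      ⟨ρt₂, m_rt2⟩ ⟨τt₂, m_tt2⟩ ⟨τ₁⁻¹, m_i1⟩ ⟨τ₂⁻¹, m_i2⟩ ⟨(τt₁ᴴ)⁻¹, m_j1⟩ ⟨(τt₂ᴴ)⁻¹, m_j2⟩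
      ⟨(1 - ρt₁ * ρ₂)⁻¹, m_m⟩ ⟨ρt₁ᴴ, m_a1⟩ ⟨ρ₂ᴴ, m_a2⟩ ⟨τt₁ᴴ, m_b1⟩ ⟨τt₂ᴴ, m_b2⟩
      (Subtype.ext (Matrix.mul_nonsing_inv _ dτ₁))
      (Subtype.ext (Matrix.mul_nonsing_inv _ dτ₂))
      (Subtype.ext (Matrix.mul_nonsing_inv _ dM))
      (Subtype.ext (Matrix.mul_nonsing_inv _ dτt₁H))
      (Subtype.ext (Matrix.mul_nonsing_inv _ dτt₂H))
      (Subtype.ext B1) (Subtype.ext B2) (Subtype.ext B3) (Subtype.ext B4)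
  have e11 : τ₁⁻¹ * τ₂⁻¹ + -(τ₁⁻¹ * ρt₁) * (ρ₂ * τ₂⁻¹)
      = τ₁⁻¹ * (1 - ρt₁ * ρ₂) * τ₂⁻¹ := congrArg Subtype.val c11
  have e12 : τ₁⁻¹ * -(τ₂⁻¹ * ρt₂) + -(τ₁⁻¹ * ρt₁) * (τt₂ᴴ)⁻¹
      = -(τ₁⁻¹ * (1 - ρt₁ * ρ₂) * τ₂⁻¹ * (ρt₂ + τ₂ * ρt₁ * (1 - ρt₁ * ρ₂)⁻¹ * τt₂)) :=
    congrArg Subtype.val c12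
  have e21 : ρ₁ * τ₁⁻¹ * τ₂⁻¹ + (τt₁ᴴ)⁻¹ * (ρ₂ * τ₂⁻¹)
      = (ρ₁ + τt₁ * ρ₂ * (1 - ρt₁ * ρ₂)⁻¹ * τ₁) * (τ₁⁻¹ * (1 - ρt₁ * ρ₂) * τ₂⁻¹) :=
    congrArg Subtype.val c21
  have e22 : ρ₁ * τ₁⁻¹ * -(τ₂⁻¹ * ρt₂) + (τt₁ᴴ)⁻¹ * (τt₂ᴴ)⁻¹
      = (τt₁ᴴ)⁻¹ * (1 - ρt₁ᴴ * ρ₂ᴴ) * (τt₂ᴴ)⁻¹ := congrArg Subtype.val c22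
  -- commutation used for rewrites
  have hcρ : ρ₂ * ρt₁ = ρt₁ * ρ₂ := hcomm ρ₂ (by simp [hS]) ρt₁ (by simp [hS])
  have hcρH : ρ₂ᴴ * ρt₁ᴴ = ρt₁ᴴ * ρ₂ᴴ := hcomm ρ₂ᴴ (by simp [hS]) ρt₁ᴴ (by simp [hS])
  -- inverse of τ
  have hτinv : τ⁻¹ = τ₁⁻¹ * (1 - ρt₁ * ρ₂) * τ₂⁻¹ := by
    rw [hτ, Matrix.mul_inv_rev, Matrix.mul_inv_rev,
      Matrix.nonsing_inv_nonsing_inv _ dM, mul_assoc]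
  -- inverse of τtᴴ
  have dMH : IsUnit (1 - ρt₁ᴴ * ρ₂ᴴ).det := by
    have : (1 - ρ₂ * ρt₁)ᴴ = 1 - ρt₁ᴴ * ρ₂ᴴ := by
      rw [conjTranspose_sub, conjTranspose_one, conjTranspose_mul]
    rw [← this]
    exact (Matrix.isUnit_iff_isUnit_det _).mp (hunitH _ h21)
  have hτtinv : (τtᴴ)⁻¹ = (τt₁ᴴ)⁻¹ * (1 - ρt₁ᴴ * ρ₂ᴴ) * (τt₂ᴴ)⁻¹ := by
    have hτtH : τtᴴ = τt₂ᴴ * ((1 - ρt₁ᴴ * ρ₂ᴴ)⁻¹ * τt₁ᴴ) := by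
      rw [hτt, conjTranspose_mul, conjTranspose_mul, Matrix.conjTranspose_nonsing_inv,
        conjTranspose_sub, conjTranspose_one, conjTranspose_mul]
    rw [hτtH, Matrix.mul_inv_rev, Matrix.mul_inv_rev,
      Matrix.nonsing_inv_nonsing_inv _ dMH]
  rw [Matrix.fromBlocks_multiply, hτinv, hρ, hρt, hτtinv, hcρ, e11, e12, e21, e22]
end

section
/- The successive-approximation series for the regular solution φ(k,x) of the matrix Schrödinger integral equation converges absolutely and uniformly: with M₀ = max over (i,j) of ∫_{−R}^{R}|V_{ij}|, the s-th iterate satisfies |φ_{ij}^{(s)}(k,x)| ≤ (sinh(2|Im k|R)/|Im k|)^s · cosh(2|Im k|R) · N^{s+2} M₀^s / s!, so Σ_s φ^{(s)}(k,x) converges for every complex k and x ∈ [−R,R]. -/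
/-!
Since `sin (k t) / k = ∫₀ᵗ cos (k u) du` and `‖cos z‖ ≤ cosh (Im z)`, the kernel is bounded by
`∫₀ᵗ cosh (|Im k| u) du`; the integrand is increasing, so this is at most `t / (2R)` times
`ratio = ∫₀^{2R} cosh (|Im k| u) du` for `0 ≤ t ≤ 2R`. With `u(x) = (x + R) / (2R) ∈ [0, 1]`,
induction on `s` gives `‖φ⁽ˢ⁾ᵢⱼ(x)‖ ≤ cosh (2 |Im k| R) (ratio N M₀)ˢ u(x)ˢ / s!`: in the step the
factorial comes from the pointwise bound `(u(x) - u(t)) u(t)ˢ / s! ≤ u(x)ˢ⁺¹ / (s+1)!`, and what is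
left is `∑ₗ ∫ |Vᵢₗ| ≤ N M₀`. Summability follows by comparison with the exponential series.
-/

open Matrix

attribute [local instance] Matrix.normedAddCommGroup Matrix.normedSpace

/-- The entire function `t ↦ sin (k t) / k` (its value at `k = 0` is `t`). -/
noncomputable def sinKern (k t : ℂ) : ℂ := if k = 0 then t else Complex.sin (k * t) / k

/-- Successive approximations for the regular solution `φ(k,x)` of the matrix
Schrödinger integral equation. -/
noncomputable def phiIter (N : ℕ) (V : ℝ → Matrix (Fin N) (Fin N) ℝ) (R : ℝ) (k : ℂ) :
    ℕ → ℝ → Matrix (Fin N) (Fin N) ℂ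
  | 0 => fun x => Complex.cos (k * ((x : ℂ) + (R : ℂ))) • (1 : Matrix (Fin N) (Fin N) ℂ)
  | s + 1 => fun x =>
      ∫ t in (-R)..x,
        sinKern k ((x : ℂ) - (t : ℂ)) • ((V t).map Complex.ofReal * phiIter N V R k s t)

open MeasureTheory Set

theorem ContinuousLinearMap.norm_apply_intervalIntegral_le {E F : Type*}
    [NormedAddCommGroup E] [NormedSpace ℝ E] [CompleteSpace E]
    [NormedAddCommGroup F] [NormedSpace ℝ F] [CompleteSpace F] (L : E →L[ℝ] F)
    {f : ℝ → E} {g : ℝ → ℝ} {a b : ℝ} (hab : a ≤ b) (hg : IntervalIntegrable g volume a b)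
    (hfg : ∀ t ∈ Icc a b, ‖L (f t)‖ ≤ g t) :
    ‖L (∫ t in a..b, f t)‖ ≤ ∫ t in a..b, g t := by
  by_cases hf : IntervalIntegrable f volume a b
  · rw [← L.intervalIntegral_comp_comm hf]
    exact intervalIntegral.norm_integral_le_of_norm_le hab
      (.of_forall fun t ht => hfg t (Ioc_subset_Icc_self ht)) hg
  · rw [intervalIntegral.integral_undef hf, map_zero, norm_zero]
    exact intervalIntegral.integral_nonneg hab fun t ht => (norm_nonneg _).trans (hfg t ht)

theorem Matrix.norm_intervalIntegral_apply_le {m n E : Type*} [Fintype m] [Fintype n]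
    [NormedAddCommGroup E] [NormedSpace ℝ E] [CompleteSpace E]
    {F : ℝ → Matrix m n E} {g : ℝ → ℝ} {a b : ℝ} (hab : a ≤ b)
    (hg : IntervalIntegrable g volume a b) (i : m) (j : n)
    (hFg : ∀ t ∈ Icc a b, ‖F t i j‖ ≤ g t) :
    ‖(∫ t in a..b, F t) i j‖ ≤ ∫ t in a..b, g t :=
  ((ContinuousLinearMap.proj j).comp (ContinuousLinearMap.proj (R := ℝ)
    (φ := fun _ : m => n → E) i)).norm_apply_intervalIntegral_le hab hg hFg

theorem Complex.norm_cos_le_cosh_im (z : ℂ) : ‖cos z‖ ≤ Real.cosh z.im := by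
  have h₁ : ‖exp (z * I)‖ = Real.exp (-z.im) := by simp [norm_exp]
  have h₂ : ‖exp (-z * I)‖ = Real.exp z.im := by simp [norm_exp]
  calc ‖cos z‖ = ‖exp (z * I) + exp (-z * I)‖ / 2 := by rw [cos, norm_div, Complex.norm_two]
    _ ≤ (Real.exp (-z.im) + Real.exp z.im) / 2 := by
        gcongr; exact (norm_add_le _ _).trans (by rw [h₁, h₂])
    _ = Real.cosh z.im := by rw [Real.cosh_eq]; ring

theorem integral_cosh_mul (c L : ℝ) :
    ∫ s in (0 : ℝ)..L, Real.cosh (c * s) = if c = 0 then L else Real.sinh (c * L) / c := by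
  split_ifs with hc
  · simp [hc]
  · have hderiv (s : ℝ) : HasDerivAt (fun s => Real.sinh (c * s) / c) (Real.cosh (c * s)) s := by
      simpa [mul_div_cancel_right₀ _ hc] using
        ((Real.hasDerivAt_sinh _).comp s ((hasDerivAt_id s).const_mul c)).div_const c
    rw [intervalIntegral.integral_eq_sub_of_hasDerivAt (fun s _ => hderiv s)
      (Continuous.intervalIntegrable (by fun_prop) _ _)]
    simp

theorem intervalIntegral_le_div_mul_of_monotoneOn {f : ℝ → ℝ} {t L : ℝ}
    (hf : MonotoneOn f (Icc 0 L)) (ht : 0 ≤ t) (htL : t ≤ L) :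
    ∫ s in (0 : ℝ)..t, f s ≤ t / L * ∫ s in (0 : ℝ)..L, f s := by
  rcases ht.eq_or_lt with rfl | ht
  · simp
  have hL : 0 < L := ht.trans_le htL
  have hstretch : MapsTo (L / t * ·) (Icc 0 t) (Icc 0 L) := fun s hs =>
    ⟨by positivity [hs.1], by
      calc L / t * s ≤ L / t * t := by gcongr; exact hs.2
        _ = L := div_mul_cancel₀ _ ht.ne'⟩
  have hmono : MonotoneOn (fun s => f (L / t * s)) (uIcc 0 t) := by
    rw [uIcc_of_le ht.le]
    exact fun a ha b hb hab => hf (hstretch ha) (hstretch hb)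
      (mul_le_mul_of_nonneg_left hab (by positivity))
  have hf_int : IntervalIntegrable f volume 0 t :=
    (hf.mono (by rw [uIcc_of_le ht.le]; exact Icc_subset_Icc le_rfl htL)).intervalIntegrable
  calc ∫ s in (0 : ℝ)..t, f s ≤ ∫ s in (0 : ℝ)..t, f (L / t * s) :=
        intervalIntegral.integral_mono_on ht.le hf_int hmono.intervalIntegrable fun s hs =>
          hf (Icc_subset_Icc le_rfl htL hs) (hstretch hs)
            (le_mul_of_one_le_left hs.1 ((one_le_div ht).2 htL))
    _ = t / L * ∫ s in (0 : ℝ)..L, f s := by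
        rw [intervalIntegral.integral_comp_mul_left _ (by positivity), smul_eq_mul, mul_zero,
          div_mul_cancel₀ _ ht.ne', inv_div]

open Finset in
theorem sub_mul_pow_div_factorial_le {a b : ℝ} (hb : 0 ≤ b) (hba : b ≤ a) (s : ℕ) :
    (a - b) * b ^ s / s.factorial ≤ a ^ (s + 1) / (s + 1).factorial := by
  have htangent : (s + 1) * b ^ s * (a - b) ≤ a ^ (s + 1) - b ^ (s + 1) :=
    calc (s + 1) * b ^ s * (a - b)
        = (∑ i ∈ range (s + 1), b ^ i * b ^ (s + 1 - 1 - i)) * (a - b) := by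
          rw [geom_sum₂_self]; push_cast; rfl
      _ ≤ (∑ i ∈ range (s + 1), a ^ i * b ^ (s + 1 - 1 - i)) * (a - b) := by gcongr with i
      _ = a ^ (s + 1) - b ^ (s + 1) := geom_sum₂_mul a b (s + 1)
  rw [Nat.factorial_succ, Nat.cast_mul, div_le_div_iff₀ (by positivity) (by positivity)]
  push_cast
  nlinarith [pow_nonneg hb (s + 1), (s.factorial_pos : 0 < s.factorial)]

theorem sinKern_eq_integral_cos (k : ℂ) (t : ℝ) :
    sinKern k t = ∫ s in (0 : ℝ)..t, Complex.cos (k * s) := by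
  by_cases hk : k = 0
  · simp [sinKern, hk]
  · simp [sinKern, hk, integral_cos_mul_complex hk]

theorem norm_sinKern_le (k : ℂ) {t L : ℝ} (ht : 0 ≤ t) (htL : t ≤ L) :
    ‖sinKern k t‖ ≤ t / L * ∫ s in (0 : ℝ)..L, Real.cosh (|k.im| * s) := by
  have hcosh_mono : MonotoneOn (fun s => Real.cosh (|k.im| * s)) (Ici 0) :=
    fun a ha b hb hab => by
      simp only [Real.cosh_le_cosh, abs_mul, abs_abs, abs_of_nonneg (mem_Ici.1 ha),
        abs_of_nonneg (mem_Ici.1 hb)]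
      gcongr
  calc ‖sinKern k t‖ ≤ ∫ s in (0 : ℝ)..t, Real.cosh (|k.im| * s) := by
        rw [sinKern_eq_integral_cos]
        refine intervalIntegral.norm_integral_le_of_norm_le ht (.of_forall fun s hs => ?_)
          (Continuous.intervalIntegrable (by fun_prop) _ _)
        have := Complex.norm_cos_le_cosh_im (k * s)
        rwa [Complex.mul_im, Complex.ofReal_re, Complex.ofReal_im, mul_zero, zero_add,
          ← Real.cosh_abs, abs_mul, abs_of_pos hs.1] at this
    _ ≤ t / L * ∫ s in (0 : ℝ)..L, Real.cosh (|k.im| * s) :=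
        intervalIntegral_le_div_mul_of_monotoneOn (hcosh_mono.mono Icc_subset_Ici_self) ht htL

section phiIter

variable {N : ℕ} {V : ℝ → Matrix (Fin N) (Fin N) ℝ} {R : ℝ} {k : ℂ}

theorem phiIter_succ_neg (s : ℕ) : phiIter N V R k (s + 1) (-R) = 0 := by
  simp [phiIter]

theorem norm_phiIter_zero_apply_le {y : ℝ} (hy : y ∈ Icc (-R) R) (i j : Fin N) :
    ‖phiIter N V R k 0 y i j‖ ≤ Real.cosh (2 * |k.im| * R) := by
  have hone : ‖(1 : Matrix (Fin N) (Fin N) ℂ) i j‖ ≤ 1 := by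
    rw [one_apply]; split_ifs <;> simp
  have him : (k * ((y : ℂ) + R)).im = k.im * (y + R) := by simp
  have hyR : 0 ≤ y + R := by linarith [hy.1]
  have hR : 0 ≤ R := by linarith [hy.1.trans hy.2]
  calc ‖phiIter N V R k 0 y i j‖ ≤ ‖Complex.cos (k * ((y : ℂ) + R))‖ := by
        simpa [phiIter] using mul_le_of_le_one_right (norm_nonneg _) hone
    _ ≤ Real.cosh (k.im * (y + R)) := him ▸ Complex.norm_cos_le_cosh_im _
    _ ≤ Real.cosh (2 * |k.im| * R) := by
        rw [Real.cosh_le_cosh, abs_of_nonneg (by positivity : 0 ≤ 2 * |k.im| * R), abs_mul,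
          abs_of_nonneg hyR]
        nlinarith [abs_nonneg k.im, hy.2]

theorem norm_phiIter_succ_apply_le {M₀ C : ℝ}
    (hInt : ∀ i j, IntegrableOn (fun x => |V x i j|) (Icc (-R) R))
    (hM₀ : ∀ i j, (∫ x in (-R)..R, |V x i j|) ≤ M₀) {s : ℕ} {y : ℝ} (hy : y ∈ Icc (-R) R)
    (hC : 0 ≤ C) (i j : Fin N)
    (h : ∀ t ∈ Icc (-R) y, ∀ l, ‖sinKern k (y - t)‖ * ‖phiIter N V R k s t l j‖ ≤ C) :
    ‖phiIter N V R k (s + 1) y i j‖ ≤ C * (N * M₀) := by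
  have hV {z : ℝ} (hz : z ∈ Icc (-R) R) (l : Fin N) :
      IntervalIntegrable (fun t => |V t i l|) volume (-R) z := by
    rw [intervalIntegrable_iff_integrableOn_Icc_of_le hz.1]
    exact (hInt i l).mono_set (Icc_subset_Icc le_rfl hz.2)
  have hrow : IntervalIntegrable (fun t => ∑ l, |V t i l|) volume (-R) y := by
    simpa only [Finset.sum_fn] using IntervalIntegrable.sum Finset.univ fun l _ => hV hy l
  have hentry (t : ℝ) (ht : t ∈ Icc (-R) y) :
      ‖(sinKern k (y - t) • ((V t).map Complex.ofReal * phiIter N V R k s t)) i j‖ ≤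
        C * ∑ l, |V t i l| := by
    rw [Matrix.smul_apply, mul_apply, smul_eq_mul, norm_mul, Finset.mul_sum]
    refine (mul_le_mul_of_nonneg_left (norm_sum_le _ _) (norm_nonneg _)).trans ?_
    rw [Finset.mul_sum]
    refine Finset.sum_le_sum fun l _ => ?_
    rw [norm_mul, map_apply, Complex.norm_real, Real.norm_eq_abs, mul_left_comm, mul_comm C]
    exact mul_le_mul_of_nonneg_left (h t ht l) (abs_nonneg _)
  -- `V` is not assumed measurable, so the matrix integrand may fail to be integrable.
  calc ‖phiIter N V R k (s + 1) y i j‖ ≤ ∫ t in (-R)..y, C * ∑ l, |V t i l| :=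
        Matrix.norm_intervalIntegral_apply_le hy.1 (hrow.const_mul C) i j hentry
    _ = C * ∑ l, ∫ t in (-R)..y, |V t i l| := by
        rw [intervalIntegral.integral_const_mul, intervalIntegral.integral_finsetSum
          fun l _ => hV hy l]
    _ ≤ C * ∑ _l : Fin N, M₀ := by
        gcongr with l
        refine (intervalIntegral.integral_mono_interval le_rfl hy.1 hy.2
          (.of_forall fun _ => abs_nonneg _) (hV ⟨?_, le_rfl⟩ l)).trans (hM₀ i l)
        linarith [hy.1.trans hy.2]
    _ = C * (N * M₀) := by simp

theorem norm_phiIter_apply_le_of_pos {M₀ : ℝ} (hR : 0 < R)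
    (hInt : ∀ i j, IntegrableOn (fun x => |V x i j|) (Icc (-R) R))
    (hM₀ : ∀ i j, (∫ x in (-R)..R, |V x i j|) ≤ M₀) (hM₀_nonneg : 0 ≤ M₀) (s : ℕ) {y : ℝ}
    (hy : y ∈ Icc (-R) R) (i j : Fin N) :
    ‖phiIter N V R k s y i j‖ ≤ Real.cosh (2 * |k.im| * R) *
      ((∫ u in (0 : ℝ)..2 * R, Real.cosh (|k.im| * u)) * N * M₀) ^ s *
        ((y + R) / (2 * R)) ^ s / s.factorial := by
  set ρ := ∫ u in (0 : ℝ)..2 * R, Real.cosh (|k.im| * u)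
  induction s generalizing y i j with
  | zero => simpa using norm_phiIter_zero_apply_le hy i j
  | succ s ih =>
    set D := Real.cosh (2 * |k.im| * R) * (ρ * N * M₀) ^ s
    have hρ : 0 ≤ ρ :=
      intervalIntegral.integral_nonneg (by positivity) fun u _ => (Real.cosh_pos _).le
    have hD : 0 ≤ D := by positivity
    have hu {t : ℝ} (ht : -R ≤ t) : 0 ≤ (t + R) / (2 * R) :=
      div_nonneg (by linarith) (by positivity)
    have hstep := norm_phiIter_succ_apply_le hInt hM₀ hy
      (C := D * ρ * (((y + R) / (2 * R)) ^ (s + 1) / (s + 1).factorial))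
      (by positivity [hu hy.1]) i j fun t ht l => by
        have hker := norm_sinKern_le k (by linarith [ht.2] : 0 ≤ y - t)
          (by linarith [ht.1, hy.2] : y - t ≤ 2 * R)
        rw [Complex.ofReal_sub, show (y - t) / (2 * R) = (y + R) / (2 * R) - (t + R) / (2 * R)
          by ring] at hker
        have htu : (t + R) / (2 * R) ≤ (y + R) / (2 * R) := by gcongr; exact ht.2
        calc ‖sinKern k (y - t)‖ * ‖phiIter N V R k s t l j‖
            ≤ ((y + R) / (2 * R) - (t + R) / (2 * R)) * ρ *
                (D * ((t + R) / (2 * R)) ^ s / s.factorial) :=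
              mul_le_mul hker (ih ⟨ht.1, ht.2.trans hy.2⟩ l j) (norm_nonneg _)
                (mul_nonneg (sub_nonneg.2 htu) hρ)
          _ = D * ρ * (((y + R) / (2 * R) - (t + R) / (2 * R)) *
                ((t + R) / (2 * R)) ^ s / s.factorial) := by ring
          _ ≤ D * ρ * (((y + R) / (2 * R)) ^ (s + 1) / (s + 1).factorial) :=
              mul_le_mul_of_nonneg_left (sub_mul_pow_div_factorial_le (hu ht.1) htu s)
                (mul_nonneg hD hρ)
    exact hstep.trans_eq (by ring)

theorem norm_phiIter_apply_le {M₀ x : ℝ}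
    (hInt : ∀ i j, IntegrableOn (fun x => |V x i j|) (Icc (-R) R))
    (hM₀ : ∀ i j, (∫ x in (-R)..R, |V x i j|) ≤ M₀) (hx : x ∈ Icc (-R) R) (s : ℕ)
    (i j : Fin N) :
    ‖phiIter N V R k s x i j‖ ≤ (∫ u in (0 : ℝ)..2 * R, Real.cosh (|k.im| * u)) ^ s *
      Real.cosh (2 * |k.im| * R) * (N : ℝ) ^ (s + 2) * M₀ ^ s / s.factorial := by
  set ρ := ∫ u in (0 : ℝ)..2 * R, Real.cosh (|k.im| * u)
  have hR : 0 ≤ R := by linarith [hx.1.trans hx.2]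
  have hρ : 0 ≤ ρ :=
    intervalIntegral.integral_nonneg (by positivity) fun u _ => (Real.cosh_pos _).le
  have hM₀_nonneg : 0 ≤ M₀ :=
    (intervalIntegral.integral_nonneg (by linarith) fun _ _ => abs_nonneg _).trans (hM₀ i i)
  have hN : (1 : ℝ) ≤ N := by exact_mod_cast i.pos
  rcases hR.eq_or_lt with rfl | hR
  · obtain rfl : x = -0 := by linarith [hx.1, hx.2]
    cases s with
    | zero =>
      calc ‖phiIter N V 0 k 0 (-0) i j‖ ≤ Real.cosh (2 * |k.im| * 0) :=
            norm_phiIter_zero_apply_le hx i j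
        _ ≤ _ := by simpa using Nat.one_le_of_lt i.pos
    | succ s => rw [phiIter_succ_neg]; simp only [Matrix.zero_apply, norm_zero]; positivity
  have hu : (x + R) / (2 * R) ≤ 1 := by rw [div_le_one (by positivity)]; linarith [hx.2]
  calc ‖phiIter N V R k s x i j‖
      ≤ Real.cosh (2 * |k.im| * R) * (ρ * N * M₀) ^ s * ((x + R) / (2 * R)) ^ s /
          s.factorial := norm_phiIter_apply_le_of_pos hR hInt hM₀ hM₀_nonneg s hx i j
    _ ≤ Real.cosh (2 * |k.im| * R) * (ρ * N * M₀) ^ s * (N : ℝ) ^ 2 / s.factorial := by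
        gcongr
        exact (pow_le_one₀ (div_nonneg (by linarith [hx.1]) (by positivity)) hu).trans
          (one_le_pow₀ hN)
    _ = ρ ^ s * Real.cosh (2 * |k.im| * R) * (N : ℝ) ^ (s + 2) * M₀ ^ s / s.factorial := by
        ring

end phiIter

theorem stmt_19_general (N : ℕ) (V : ℝ → Matrix (Fin N) (Fin N) ℝ) (R : ℝ)
    (hInt : ∀ i j, MeasureTheory.IntegrableOn (fun x => |V x i j|) (Set.Icc (-R) R))
    (M₀ : ℝ) (hM₀ : ∀ i j, (∫ x in (-R)..R, |V x i j|) ≤ M₀)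
    (k : ℂ) (ratio : ℝ)
    (hratio : ratio = if k.im = 0 then 2 * R else Real.sinh (2 * |k.im| * R) / |k.im|) :
    ∀ x ∈ Set.Icc (-R) R,
      (∀ s : ℕ, ∀ i j, ‖phiIter N V R k s x i j‖ ≤
        ratio ^ s * Real.cosh (2 * |k.im| * R) * (N : ℝ) ^ (s + 2) * M₀ ^ s / s.factorial) ∧
      Summable (fun s : ℕ => phiIter N V R k s x) := by
  intro x hx
  have hratio_eq : ratio = ∫ u in (0 : ℝ)..2 * R, Real.cosh (|k.im| * u) := by
    rw [hratio, integral_cosh_mul]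
    simp only [abs_eq_zero]
    split_ifs <;> ring_nf
  have hbound := hratio_eq ▸ norm_phiIter_apply_le (k := k) hInt hM₀ hx
  refine ⟨hbound, Pi.summable.2 fun i => Pi.summable.2 fun j => ?_⟩
  have hmajorant := (Real.summable_pow_div_factorial (ratio * N * M₀)).mul_left
    (Real.cosh (2 * |k.im| * R) * (N : ℝ) ^ 2)
  exact .of_norm_bounded (hmajorant.congr fun s => by ring) fun s => hbound s i j

theorem stmt_19 (N : ℕ) (V : ℝ → Matrix (Fin N) (Fin N) ℝ) (R : ℝ) (hR : 0 ≤ R)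
    (hInt : ∀ i j, MeasureTheory.IntegrableOn (fun x => |V x i j|) (Set.Icc (-R) R))
    (M₀ : ℝ) (hM₀ : ∀ i j, (∫ x in (-R)..R, |V x i j|) ≤ M₀)
    (k : ℂ) (ratio : ℝ)
    (hratio : ratio = if k.im = 0 then 2 * R else Real.sinh (2 * |k.im| * R) / |k.im|) :
    ∀ x ∈ Set.Icc (-R) R,
      (∀ s : ℕ, ∀ i j, ‖phiIter N V R k s x i j‖ ≤
        ratio ^ s * Real.cosh (2 * |k.im| * R) * (N : ℝ) ^ (s + 2) * M₀ ^ s / s.factorial) ∧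
      Summable (fun s : ℕ => phiIter N V R k s x) :=
  stmt_19_general N V R hInt M₀ hM₀ k ratio hratio
end
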